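/- arXiv:1311.1451 — 2 statements merged into one kernel-verified Lean document; each statement's English description precedes it below -/
import Mathlib

section
/- The equation x⁴ + 12x²y² + 4y⁴ = z² with the constraint gcd(x,y) = 1 has only trivial solutions over the integers: every integer solution (x, y, z) with gcd(x,y) = 1 satisfies x·y = 0. -/
set_option maxHeartbeats 1000000

private lemma descent_step (x y a b : ℤ) (hx : Odd x) (hy : y ≠ 0)
    (hcop : IsCoprime x y) (ha : Odd a)
    (h1 : a ^ 2 - 2 * b ^ 2 = x ^ 2 + 2 * y ^ 2) (h2 : a * b = x * y) : False := by
  have ha0 : a ≠ 0 := by rintro rfl; simp [Int.odd_iff] at ha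
  set gn : ℕ := Int.gcd a x with hgn
  have hgpos : 0 < gn := Int.gcd_pos_iff.mpr (Or.inl ha0)
  set g : ℤ := (gn : ℤ) with hg
  have hgne : g ≠ 0 := by positivity
  obtain ⟨a₁, ha₁⟩ : g ∣ a := Int.gcd_dvd_left a x
  obtain ⟨x₁, hx₁⟩ : g ∣ x := Int.gcd_dvd_right a x
  have hcop₁ : IsCoprime a₁ x₁ := by
    rw [Int.isCoprime_iff_gcd_eq_one]
    have h := Int.gcd_div_gcd_div_gcd (hgn ▸ hgpos : 0 < Int.gcd a x)
    have e1 : a / g = a₁ := by rw [ha₁]; exact Int.mul_ediv_cancel_left _ hgne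
    have e2 : x / g = x₁ := by rw [hx₁]; exact Int.mul_ediv_cancel_left _ hgne
    rwa [e1, e2] at h
  have h2' : a₁ * b = x₁ * y := by
    apply mul_left_cancel₀ hgne
    rw [ha₁, hx₁] at h2; linear_combination h2
  obtain ⟨y₁, hy₁⟩ : a₁ ∣ y := hcop₁.dvd_of_dvd_mul_left ⟨b, h2'.symm⟩
  have ha₁0 : a₁ ≠ 0 := by rintro rfl; rw [mul_zero] at ha₁; exact ha0 ha₁
  have hb : b = x₁ * y₁ := by
    apply mul_left_cancel₀ ha₁0
    rw [hy₁] at h2'; linear_combination h2'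
  have hoa₁ : Odd a₁ := by rw [ha₁, Int.odd_mul] at ha; exact ha.2
  have hox₁ : Odd x₁ := by rw [hx₁, Int.odd_mul] at hx; exact hx.2
  have key : g ^ 2 * (a₁ ^ 2 - x₁ ^ 2) = 2 * y₁ ^ 2 * (a₁ ^ 2 + x₁ ^ 2) := by
    rw [ha₁, hx₁, hy₁, hb] at h1; linear_combination h1
  obtain ⟨i, hi⟩ := id hoa₁
  obtain ⟨j, hj⟩ := id hox₁
  obtain ⟨S, hS⟩ : ∃ S, a₁ + x₁ = 2 * S := ⟨i + j + 1, by omega⟩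
  obtain ⟨D, hD⟩ : ∃ D, a₁ - x₁ = 2 * D := ⟨i - j, by omega⟩
  have haS : a₁ = S + D := by omega
  have hxS : x₁ = S - D := by omega
  have key2 : g ^ 2 * (S * D) = y₁ ^ 2 * (S ^ 2 + D ^ 2) := by
    have h4 : 4 * (g ^ 2 * (S * D)) = 4 * (y₁ ^ 2 * (S ^ 2 + D ^ 2)) := by
      rw [haS, hxS] at key; linear_combination key
    linarith
  have hcopSD : IsCoprime S D := by
    obtain ⟨α, β, hαβ⟩ := hcop₁
    exact ⟨α + β, α - β, by rw [haS, hxS] at hαβ; linear_combination hαβ⟩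
  have hSD0 : S ^ 2 + D ^ 2 ≠ 0 := by
    intro h
    have hS0 : S = 0 := by nlinarith [sq_nonneg S, sq_nonneg D]
    have hD0 : D = 0 := by nlinarith [sq_nonneg S, sq_nonneg D]
    rw [haS, hS0, hD0] at hoa₁
    simp [Int.odd_iff] at hoa₁
  have hcopSD2 : IsCoprime (S ^ 2 + D ^ 2) (S * D) := by
    have h1' : IsCoprime (D ^ 2 + S * S) S := hcopSD.symm.pow_left.add_mul_right_left S
    have h2'' : IsCoprime (S ^ 2 + D * D) D := hcopSD.pow_left.add_mul_right_left D
    rw [show D ^ 2 + S * S = S ^ 2 + D ^ 2 from by ring] at h1'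
    rw [show S ^ 2 + D * D = S ^ 2 + D ^ 2 from by ring] at h2''
    exact h1'.mul_right h2''
  obtain ⟨k, hk⟩ : (S ^ 2 + D ^ 2) ∣ g ^ 2 :=
    hcopSD2.dvd_of_dvd_mul_right ⟨y₁ ^ 2, by linear_combination key2⟩
  have key3 : k * (S * D) = y₁ ^ 2 := by
    apply mul_left_cancel₀ hSD0
    rw [hk] at key2; linear_combination key2
  have hcopgy : IsCoprime g y₁ := by
    have hgx : g ∣ x := ⟨x₁, hx₁⟩
    have hyy : y₁ ∣ y := ⟨a₁, by rw [hy₁]; ring⟩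
    exact (hcop.of_isCoprime_of_dvd_left hgx).of_isCoprime_of_dvd_right hyy
  have hkunit : IsUnit k := by
    have hc : IsCoprime k (y₁ ^ 2) :=
      (hcopgy.pow).of_isCoprime_of_dvd_left ⟨S ^ 2 + D ^ 2, by rw [hk]; ring⟩
    exact hc.isUnit_of_dvd' dvd_rfl ⟨S * D, key3.symm⟩
  have hk1 : k = 1 := by
    rcases Int.isUnit_iff.mp hkunit with h | h
    · exact h
    · exfalso
      rw [h] at hk
      have hgg : 0 < g ^ 2 := by positivity
      nlinarith [sq_nonneg S, sq_nonneg D]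
  rw [hk1, mul_one] at hk
  rw [hk1, one_mul] at key3
  obtain ⟨α, hα⟩ := Int.sq_of_isCoprime hcopSD key3
  obtain ⟨β, hβ⟩ :=
    Int.sq_of_isCoprime hcopSD.symm (show D * S = y₁ ^ 2 by linear_combination key3)
  have hy₁0 : y₁ ≠ 0 := by rintro rfl; rw [hy₁, mul_zero] at hy; exact hy rfl
  have hy₁sq : 0 < y₁ ^ 2 := by positivity
  rcases hα with hα | hα <;> rcases hβ with hβ | hβ
  · have hα0 : α ≠ 0 := by
      rintro rfl; simp only [ne_eq, zero_pow, OfNat.ofNat_ne_zero, not_false_eq_true] at hα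
      rw [hα, zero_mul] at key3; nlinarith
    have hβ0 : β ≠ 0 := by
      rintro rfl; simp only [ne_eq, zero_pow, OfNat.ofNat_ne_zero, not_false_eq_true] at hβ
      rw [hβ] at key3; rw [mul_zero] at key3; nlinarith
    exact not_fermat_42 hα0 hβ0 (show α ^ 4 + β ^ 4 = g ^ 2 by
      rw [hα, hβ] at hk; linear_combination -hk)
  · rw [hα, hβ] at key3; nlinarith [sq_nonneg (α * β), hy₁sq]
  · rw [hα, hβ] at key3; nlinarith [sq_nonneg (α * β), hy₁sq]
  · have hα0 : α ≠ 0 := by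
      rintro rfl; simp only [ne_eq, zero_pow, OfNat.ofNat_ne_zero, not_false_eq_true,
        neg_zero] at hα
      rw [hα, zero_mul] at key3; nlinarith
    have hβ0 : β ≠ 0 := by
      rintro rfl; simp only [ne_eq, zero_pow, OfNat.ofNat_ne_zero, not_false_eq_true,
        neg_zero] at hβ
      rw [hβ, mul_zero] at key3; nlinarith
    exact not_fermat_42 hα0 hβ0 (show α ^ 4 + β ^ 4 = g ^ 2 by
      rw [hα, hβ] at hk; linear_combination -hk)

private lemma quartic_odd (x y z : ℤ) (hx : Odd x) (hcop : IsCoprime x y)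
    (heq : x ^ 4 + 12 * x ^ 2 * y ^ 2 + 4 * y ^ 4 = z ^ 2) : x * y = 0 := by
  rcases eq_or_ne y 0 with rfl | hy
  · ring
  exfalso
  have hxne : x ≠ 0 := by rintro rfl; simp [Int.odd_iff] at hx
  have hc2x : IsCoprime (2 : ℤ) x := by
    obtain ⟨k, hk⟩ := id hx; exact ⟨-k, 1, by rw [hk]; ring⟩
  have hux : IsCoprime (x ^ 2 + 2 * y ^ 2) x := by
    have h : IsCoprime (2 * y ^ 2 + x * x) x :=
      (hc2x.mul_left hcop.symm.pow_left).add_mul_right_left x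
    rwa [show 2 * y ^ 2 + x * x = x ^ 2 + 2 * y ^ 2 from by ring] at h
  have huy : IsCoprime (x ^ 2 + 2 * y ^ 2) y := by
    have h : IsCoprime (x ^ 2 + 2 * y * y) y := hcop.pow_left.add_mul_right_left (2 * y)
    rwa [show x ^ 2 + 2 * y * y = x ^ 2 + 2 * y ^ 2 from by ring] at h
  have hou : Odd (x ^ 2 + 2 * y ^ 2) := by
    obtain ⟨k, hk⟩ := id hx; exact ⟨2 * k ^ 2 + 2 * k + y ^ 2, by rw [hk]; ring⟩
  have hu2 : IsCoprime (x ^ 2 + 2 * y ^ 2) 2 := by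
    obtain ⟨k, hk⟩ := id hou; exact ⟨1, -k, by rw [hk]; ring⟩
  set u : ℤ := x ^ 2 + 2 * y ^ 2 with hu
  set Z : ℤ := |z| with hZ
  have hZ2 : Z ^ 2 = u ^ 2 + 8 * (x * y) ^ 2 := by
    rw [hZ, sq_abs, hu]; linear_combination -heq
  have hoZ : Odd Z := by
    have hoZ2 : Odd (Z ^ 2) := by
      rw [hZ2]; exact (hou.pow).add_even ⟨4 * (x * y) ^ 2, by ring⟩
    rcases Int.even_or_odd Z with h | h
    · exfalso
      have : Even (Z ^ 2) := by rw [sq]; exact h.mul_left Z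
      exact (Int.not_odd_iff_even.mpr this) hoZ2
    · exact h
  obtain ⟨c, hc⟩ : ∃ c, Z - u = 2 * c := by
    obtain ⟨k, hk⟩ := id hoZ; obtain ⟨l, hl⟩ := id hou; exact ⟨k - l, by omega⟩
  obtain ⟨e, he⟩ : ∃ e, Z + u = 2 * e := ⟨c + u, by omega⟩
  have hZpos : 0 < Z := by
    rcases (abs_nonneg z).lt_or_eq with h | h
    · exact h
    · exfalso; rw [hZ, ← h] at hoZ; simp [Int.odd_iff] at hoZ
  have hec : e = c + u := by omega
  have hu_ec : u = e - c := by omega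
  have hce : c * e = 2 * (x * y) ^ 2 := by
    have hZc : Z = u + 2 * c := by omega
    rw [hZc] at hZ2
    have h4 : 4 * (c * e) = 4 * (2 * (x * y) ^ 2) := by
      rw [hec]; linear_combination hZ2
    linarith
  have hcopu : IsCoprime u (2 * (x * y) ^ 2) :=
    hu2.symm.symm.mul_right ((hux.mul_right huy).pow_right)
  have hcopce : IsCoprime c e := by
    obtain ⟨α, β, hαβ⟩ := hcopu
    exact ⟨β * e - α, α, by linear_combination hαβ + β * hce - α * hu_ec⟩
  have ht0 : x * y ≠ 0 := mul_ne_zero hxne hy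
  have hprod : 0 < c * e := by rw [hce]; positivity
  have hcpos : 0 < c := by
    rcases lt_trichotomy c 0 with h | h | h
    · exfalso; nlinarith
    · exfalso; rw [h, zero_mul] at hprod; exact lt_irrefl 0 hprod
    · exact h
  have hepos : 0 < e := by nlinarith
  rcases Int.even_or_odd c with hev | hodc
  · -- c even, e odd : descend
    obtain ⟨c₁, hc₁⟩ := hev
    have hc₁' : c = 2 * c₁ := by omega
    have hoe : Odd e := by obtain ⟨k, hk⟩ := id hoZ; exact ⟨k - c₁, by omega⟩
    have hc1e : c₁ * e = (x * y) ^ 2 := by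
      rw [hc₁'] at hce
      have : 2 * (c₁ * e) = 2 * (x * y) ^ 2 := by linear_combination hce
      linarith
    have hcop1 : IsCoprime c₁ e := by
      rw [hc₁'] at hcopce; exact hcopce.of_mul_left_right
    obtain ⟨m, hm⟩ := Int.sq_of_isCoprime hcop1 hc1e
    obtain ⟨n, hn⟩ :=
      Int.sq_of_isCoprime hcop1.symm (show e * c₁ = (x * y) ^ 2 by linear_combination hc1e)
    have hc₁pos : 0 < c₁ := by omega
    have hm' : c₁ = m ^ 2 := by
      rcases hm with h | h
      · exact h
      · exfalso; nlinarith [sq_nonneg m]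
    have hn' : e = n ^ 2 := by
      rcases hn with h | h
      · exact h
      · exfalso; nlinarith [sq_nonneg n]
    have hon : Odd n := by
      rcases Int.even_or_odd n with h | h
      · exfalso
        have hev2 : Even (n ^ 2) := by rw [sq]; exact h.mul_left n
        rw [hn'] at hoe
        exact (Int.not_odd_iff_even.mpr hev2) hoe
      · exact h
    have hd1 : n ^ 2 - 2 * m ^ 2 = x ^ 2 + 2 * y ^ 2 := by
      rw [← hn', ← hm', ← hu]; linarith
    have hsq : m ^ 2 * n ^ 2 = (x * y) ^ 2 := by rw [← hm', ← hn']; exact hc1e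
    have hmn : (m * n - x * y) * (m * n + x * y) = 0 := by linear_combination hsq
    rcases mul_eq_zero.mp hmn with h | h
    · exact descent_step x y n m hx hy hcop hon (by linear_combination hd1)
        (by linear_combination h)
    · exact descent_step x y (-n) m hx hy hcop hon.neg (by linear_combination hd1)
        (by linear_combination -h)
  · -- c odd, e even : parity contradiction
    have hoe : Even e := by
      obtain ⟨k, hk⟩ := id hoZ; obtain ⟨l, hl⟩ := id hodc; exact ⟨k - l, by omega⟩
    obtain ⟨e₁, he₁⟩ := hoe
    have he₁' : e = 2 * e₁ := by omega
    have hc1e : c * e₁ = (x * y) ^ 2 := by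
      rw [he₁'] at hce
      have : 2 * (c * e₁) = 2 * (x * y) ^ 2 := by linear_combination hce
      linarith
    have hcop1 : IsCoprime c e₁ := by
      rw [he₁'] at hcopce; exact hcopce.of_mul_right_right
    obtain ⟨n, hn⟩ := Int.sq_of_isCoprime hcop1 hc1e
    obtain ⟨m, hm⟩ :=
      Int.sq_of_isCoprime hcop1.symm (show e₁ * c = (x * y) ^ 2 by linear_combination hc1e)
    have he₁pos : 0 < e₁ := by omega
    have hn' : c = n ^ 2 := by
      rcases hn with h | h
      · exact h
      · exfalso; nlinarith [sq_nonneg n]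
    have hm' : e₁ = m ^ 2 := by
      rcases hm with h | h
      · exact h
      · exfalso; nlinarith [sq_nonneg m]
    have hon : Odd n := by
      rcases Int.even_or_odd n with h | h
      · exfalso
        have hev2 : Even (n ^ 2) := by rw [sq]; exact h.mul_left n
        rw [hn'] at hodc
        exact (Int.not_odd_iff_even.mpr hev2) hodc
      · exact h
    obtain ⟨i, hi⟩ := id hx
    obtain ⟨j, hj⟩ := id hon
    have h0 : x ^ 2 + 2 * y ^ 2 = 2 * m ^ 2 - n ^ 2 := by
      rw [← hm', ← hn', ← hu]; linarith
    have hkey : m ^ 2 - y ^ 2 = 2 * (i ^ 2 + i + j ^ 2 + j) + 1 := by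
      rw [hi, hj] at h0
      have h2' : 2 * (m ^ 2 - y ^ 2) = 2 * (2 * (i ^ 2 + i + j ^ 2 + j) + 1) := by
        linear_combination -h0
      linarith
    have hoddmy : Odd (m ^ 2 - y ^ 2) := ⟨i ^ 2 + i + j ^ 2 + j, hkey⟩
    have hsq : (m * n) ^ 2 = (x * y) ^ 2 := by
      rw [hn', hm'] at hc1e; linear_combination hc1e
    rcases Int.even_or_odd y with hyev | hyod
    · have hy2 : Even (y ^ 2) := by rw [sq]; exact hyev.mul_left y
      have hm2 : Odd (m ^ 2) := by
        have h : m ^ 2 = (m ^ 2 - y ^ 2) + y ^ 2 := by ring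
        rw [h]; exact hoddmy.add_even hy2
      have hom : Odd m := by rw [sq, Int.odd_mul] at hm2; exact hm2.1
      have hodd_mn : Odd ((m * n) ^ 2) := (hom.mul hon).pow
      have hev_xy : Even ((x * y) ^ 2) := by
        have h : Even (x * y) := hyev.mul_left x
        rw [sq]; exact h.mul_left _
      rw [hsq] at hodd_mn
      exact (Int.not_odd_iff_even.mpr hev_xy) hodd_mn
    · have hy2 : Odd (y ^ 2) := hyod.pow
      have hom : Even m := by
        rcases Int.even_or_odd m with h | h
        · exact h
        · exfalso
          have hev' : Even (m ^ 2 - y ^ 2) := Odd.sub_odd h.pow hy2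
          exact (Int.not_odd_iff_even.mpr hev') hoddmy
      have hev_mn : Even ((m * n) ^ 2) := by
        have h : Even (m * n) := hom.mul_right n
        rw [sq]; exact h.mul_left _
      have hodd_xy : Odd ((x * y) ^ 2) := (hx.mul hyod).pow
      rw [hsq] at hev_mn
      exact (Int.not_odd_iff_even.mpr hev_mn) hodd_xy

theorem quartic_x4_add_12x2y2_add_4y4_only_trivial
    (x y z : ℤ)
    (hgcd : Int.gcd x y = 1)
    (heq : x ^ 4 + 12 * x ^ 2 * y ^ 2 + 4 * y ^ 4 = z ^ 2) :
    x * y = 0 := by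
  have hcop : IsCoprime x y := Int.isCoprime_iff_gcd_eq_one.mpr hgcd
  rcases Int.even_or_odd x with hev | hod
  · obtain ⟨v, hv⟩ := hev
    have hx2 : x = 2 * v := by omega
    have hoy : Odd y := by
      rcases Int.even_or_odd y with h | h
      · exfalso
        obtain ⟨k, hk⟩ := h
        have h2 : (2 : ℤ) ∣ (Int.gcd x y : ℤ) :=
          Int.dvd_coe_gcd ⟨v, hx2⟩ ⟨k, by omega⟩
        rw [hgcd] at h2
        norm_num at h2
      · exact h
    have hcyv : IsCoprime y v := by
      rw [hx2] at hcop; exact hcop.of_mul_left_right.symm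
    have hze : Even z := by
      rcases Int.even_or_odd z with h | h
      · exact h
      · exfalso
        have hev2 : Even (z ^ 2) := by
          rw [← heq, hx2]; exact ⟨8 * v ^ 4 + 24 * v ^ 2 * y ^ 2 + 2 * y ^ 4, by ring⟩
        exact (Int.not_odd_iff_even.mpr hev2) h.pow
    obtain ⟨w, hw⟩ := hze
    have hz2 : z = 2 * w := by omega
    have heq' : y ^ 4 + 12 * y ^ 2 * v ^ 2 + 4 * v ^ 4 = w ^ 2 := by
      rw [hx2, hz2] at heq
      have h4 : 4 * (y ^ 4 + 12 * y ^ 2 * v ^ 2 + 4 * v ^ 4) = 4 * w ^ 2 := by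
        linear_combination heq
      linarith
    have hyw := quartic_odd y v w hoy hcyv heq'
    rcases mul_eq_zero.mp hyw with h | h
    · rw [h, mul_zero]
    · rw [hx2, h, mul_zero, zero_mul]
  · exact quartic_odd x y z hod hcop heq
end

section
/- The second resolvent system over the integers, consisting of the equations x² − 2y² = x'² + 2y'² and x·y = x'·y' together with the coprimality conditions gcd(x,y) = 1 and gcd(x',y') = 1, has only trivial solutions: every integer solution (x, y, x', y') satisfies x·y = 0. -/
private lemma zmod4_sq_ne_three (C : ZMod 4) : C ^ 2 ≠ 3 := by revert C; decide

private lemma odd_pow4_zmod4 (T : ZMod 4) : (2 * T + 1) ^ 4 = 1 := by revert T; decide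

private lemma aux_primitive (a b c : ℤ) (hab : Int.gcd a b = 1)
    (h : a ^ 4 - 4 * b ^ 4 = c ^ 2) (hb : b ≠ 0) : False := by
  have hb4 : 0 < b ^ 4 := by positivity
  have ha : a ≠ 0 := by
    rintro rfl
    nlinarith [sq_nonneg c]
  rcases Int.even_or_odd a with haev | haod
  · -- a even, so b odd
    obtain ⟨k, hk⟩ := haev
    have hbodd : Odd b := by
      rcases Int.even_or_odd b with ⟨t, ht⟩ | hbo
      · exfalso
        have h2 : (2 : ℤ) ∣ (Int.gcd a b : ℤ) :=
          Int.dvd_coe_gcd ⟨k, by omega⟩ ⟨t, by omega⟩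
        rw [hab] at h2
        norm_num at h2
      · exact hbo
    have hceven : Even c := by
      rcases Int.even_or_odd c with hc | ⟨l, hl⟩
      · exact hc
      · exfalso
        have : Odd (c ^ 2) := by
          exact ⟨2 * l ^ 2 + 2 * l, by rw [hl]; ring⟩
        have heven : Even (c ^ 2) := by
          refine ⟨8 * k ^ 4 - 2 * b ^ 4, ?_⟩
          rw [← h, hk]; ring
        exact (Int.not_odd_iff_even.mpr heven) this
    obtain ⟨C, hC⟩ := hceven
    have hC2 : C ^ 2 = 4 * k ^ 4 - b ^ 4 := by
      have h4 : 4 * C ^ 2 = 4 * (4 * k ^ 4 - b ^ 4) := by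
        rw [hk, hC] at h; linear_combination -h
      linarith
    have hcast : ((C : ZMod 4)) ^ 2 = - ((b : ZMod 4)) ^ 4 := by
      have := congrArg (fun z : ℤ => (z : ZMod 4)) hC2
      push_cast at this
      rw [this]
      have h40 : (4 : ZMod 4) = 0 := rfl
      rw [h40]; ring
    obtain ⟨t, ht⟩ := hbodd
    have hb1 : ((b : ZMod 4)) ^ 4 = 1 := by
      rw [ht]; push_cast
      exact odd_pow4_zmod4 (t : ZMod 4)
    have : ((C : ZMod 4)) ^ 2 = 3 := by rw [hcast, hb1]; decide
    exact zmod4_sq_ne_three _ this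
  · -- a odd
    have hcodd : Odd c := by
      have hodd : Odd (c ^ 2) := by
        rw [← h]
        exact (haod.pow).sub_even ⟨2 * b ^ 4, by ring⟩
      rcases Int.even_or_odd c with ⟨l, hl⟩ | hco
      · exfalso
        have : Even (c ^ 2) := ⟨2 * l ^ 2, by rw [hl]; ring⟩
        exact (Int.not_odd_iff_even.mpr this) hodd
      · exact hco
    obtain ⟨k, hk⟩ := haod
    obtain ⟨l, hl⟩ := hcodd
    have hd : a ^ 2 - c = 2 * (2 * k ^ 2 + 2 * k - l) := by rw [hk, hl]; ring
    set p : ℤ := 2 * k ^ 2 + 2 * k - l with hp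
    set q : ℤ := a ^ 2 - p with hq
    have hsum : p + q = a ^ 2 := by rw [hq]; ring
    have hpq : p * q = b ^ 4 := by
      have h4 : 4 * (p * q) = 4 * b ^ 4 := by
        rw [hq]
        linear_combination h + (2 * p - a ^ 2 - c) * hd
      linarith
    have hsum0 : 0 < p + q := by
      rw [hsum]; positivity
    have hpq0 : 0 < p * q := by rw [hpq]; exact hb4
    have hp0 : 0 < p := by
      by_contra hc'
      push_neg at hc'
      have hq0' : 0 < q := by linarith
      nlinarith
    have hq0 : 0 < q := by
      by_contra hc'
      push_neg at hc'
      nlinarith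
    have hcop : IsCoprime (a ^ 2) (b ^ 4) :=
      (Int.isCoprime_iff_gcd_eq_one.mpr hab).pow
    have hg1 : gcd p q ∣ a ^ 2 := hsum ▸ dvd_add (gcd_dvd_left p q) (gcd_dvd_right p q)
    have hg2 : gcd p q ∣ b ^ 4 := hpq ▸ (gcd_dvd_left p q).mul_right q
    have hunit : IsUnit (gcd p q) := hcop.isUnit_of_dvd' hg1 hg2
    have hunit' : IsUnit (gcd q p) := by rwa [gcd_comm]
    obtain ⟨u, hu⟩ := exists_associated_pow_of_mul_eq_pow hunit hpq
    obtain ⟨v, hv⟩ := exists_associated_pow_of_mul_eq_pow hunit'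
      (show q * p = b ^ 4 by rw [mul_comm]; exact hpq)
    have hpu : p = u ^ 4 := by
      rcases Int.associated_iff.mp hu with h' | h'
      · exact h'.symm
      · exfalso; have : (0 : ℤ) ≤ u ^ 4 := by positivity
        omega
    have hqv : q = v ^ 4 := by
      rcases Int.associated_iff.mp hv with h' | h'
      · exact h'.symm
      · exfalso; have : (0 : ℤ) ≤ v ^ 4 := by positivity
        omega
    have hu0 : u ≠ 0 := by rintro rfl; rw [hpu] at hp0; simp at hp0
    have hv0 : v ≠ 0 := by rintro rfl; rw [hqv] at hq0; simp at hq0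
    exact not_fermat_42 hu0 hv0 (show u ^ 4 + v ^ 4 = a ^ 2 by rw [← hpu, ← hqv, hsum])

private lemma aux_main (a b c : ℤ) (h : a ^ 4 - 4 * b ^ 4 = c ^ 2) : b = 0 := by
  by_contra hb
  set g : ℤ := (Int.gcd a b : ℤ) with hg
  have hgcd0 : Int.gcd a b ≠ 0 := by
    intro H
    exact hb (Int.gcd_eq_zero_iff.mp H).2
  have hg0 : g ≠ 0 := by
    rw [hg]; exact_mod_cast hgcd0
  have hga : g ∣ a := Int.gcd_dvd_left a b
  have hgb : g ∣ b := Int.gcd_dvd_right a b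
  obtain ⟨a1, ha1⟩ := hga
  obtain ⟨b1, hb1⟩ := hgb
  have hcop : Int.gcd a1 b1 = 1 := by
    have hpos : 0 < Int.gcd a b := Nat.pos_of_ne_zero hgcd0
    have := Int.gcd_div_gcd_div_gcd hpos
    have hdiv1 : a / g = a1 := by rw [ha1]; exact Int.mul_ediv_cancel_left _ hg0
    have hdiv2 : b / g = b1 := by rw [hb1]; exact Int.mul_ediv_cancel_left _ hg0
    rwa [← hg, hdiv1, hdiv2] at this
  rw [ha1, hb1] at h
  have hdvd : (g ^ 2) ^ 2 ∣ c ^ 2 := ⟨a1 ^ 4 - 4 * b1 ^ 4, by rw [← h]; ring⟩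
  have hgc : g ^ 2 ∣ c := (Int.pow_dvd_pow_iff (two_ne_zero)).mp hdvd
  obtain ⟨c1, hc1⟩ := hgc
  rw [hc1] at h
  have h' : a1 ^ 4 - 4 * b1 ^ 4 = c1 ^ 2 := by
    have hg4 : g ^ 4 ≠ 0 := pow_ne_zero _ hg0
    exact mul_left_cancel₀ hg4 (by linear_combination h)
  have hb10 : b1 ≠ 0 := by
    rintro rfl
    rw [mul_zero] at hb1
    exact hb hb1
  exact aux_primitive a1 b1 c1 hcop h' hb10

theorem second_resolvent_only_trivial_solutions
    (x y x' y' : ℤ)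
    (h1 : x ^ 2 - 2 * y ^ 2 = x' ^ 2 + 2 * y' ^ 2)
    (h2 : x * y = x' * y')
    (h3 : Int.gcd x y = 1)
    (h4 : Int.gcd x' y' = 1) :
    x * y = 0 := by
  have e1 : (x' ^ 2 - 2 * y' ^ 2) ^ 2 = (x ^ 2 - 2 * y ^ 2) ^ 2 - 8 * (x * y) ^ 2 := by
    have e : (x' ^ 2 - 2 * y' ^ 2) ^ 2 = (x' ^ 2 + 2 * y' ^ 2) ^ 2 - 8 * (x' * y') ^ 2 := by
      ring
    rw [e, ← h1, ← h2]
  have key : ((x ^ 2 + 2 * y ^ 2) * (x' ^ 2 - 2 * y' ^ 2)) ^ 2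
      = (x ^ 2 - 2 * y ^ 2) ^ 4 - 4 * (2 * (x * y)) ^ 4 := by
    rw [mul_pow, e1]; ring
  have := aux_main (x ^ 2 - 2 * y ^ 2) (2 * (x * y))
    ((x ^ 2 + 2 * y ^ 2) * (x' ^ 2 - 2 * y' ^ 2)) key.symm
  linarith
end
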